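/- Let P₁, …, Pₙ be projection-valued measures, Pᵢ on (Λᵢ, Fᵢ), all with values in L(H), and fix a subtuple 1 ≤ i₁ < ⋯ < i_k ≤ n. Suppose Q, defined on the product algebra on Λ₁ × ⋯ × Λₙ, and R, defined on the product algebra on Λ_{i₁} × ⋯ × Λ_{i_k}, are finitely additive L(H)-valued measures such that Q(B₁ × ⋯ × Bₙ) = (1/n!)·{P₁(B₁)·…·Pₙ(Bₙ)}_sym for all rectangles with Bᵢ ∈ Fᵢ, and R(B_{i₁} × ⋯ × B_{i_k}) = (1/k!)·{P_{i₁}(B_{i₁})·…·P_{i_k}(B_{i_k})}_sym for all rectangles with B_{i_j} ∈ F_{i_j}. Then for every F in the product algebra on Λ_{i₁} × ⋯ × Λ_{i_k}, Q({(x₁,…,xₙ) ∈ Λ₁ × ⋯ × Λₙ : (x_{i₁},…,x_{i_k}) ∈ F}) = R(F). -/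

import Mathlib

open scoped BigOperators

/-- An algebra of subsets of a set `α`. -/
structure SetAlgebra (α : Type*) where
  sets : Set (Set α)
  univ_mem : Set.univ ∈ sets
  compl_mem : ∀ ⦃s : Set α⦄, s ∈ sets → sᶜ ∈ sets
  union_mem : ∀ ⦃s t : Set α⦄, s ∈ sets → t ∈ sets → s ∪ t ∈ sets

/-- A projection-valued measure on `(Λ, F)` with values in the bounded operators on `H`. -/
structure PVM (H : Type*) [NormedAddCommGroup H] [InnerProductSpace ℂ H]
    [CompleteSpace H] {Λ : Type*} (F : SetAlgebra Λ) where
  toFun : Set Λ → (H →L[ℂ] H)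
  isSelfAdjoint_of_mem : ∀ ⦃B : Set Λ⦄, B ∈ F.sets → IsSelfAdjoint (toFun B)
  idem_of_mem : ∀ ⦃B : Set Λ⦄, B ∈ F.sets → toFun B * toFun B = toFun B
  map_univ : toFun Set.univ = 1
  map_empty : toFun ∅ = 0
  map_union : ∀ ⦃B₁ B₂ : Set Λ⦄, B₁ ∈ F.sets → B₂ ∈ F.sets → Disjoint B₁ B₂ →
    toFun (B₁ ∪ B₂) = toFun B₁ + toFun B₂
  map_inter : ∀ ⦃B₁ B₂ : Set Λ⦄, B₁ ∈ F.sets → B₂ ∈ F.sets →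
    toFun (B₁ ∩ B₂) = toFun B₁ * toFun B₂

/-- The symmetrized product `{Z₁ ⋯ Zₙ}_sym`: the sum over all permutations `σ` of
the ordered operator products `Z_{σ(1)} ⋯ Z_{σ(n)}`. -/
noncomputable def symProd {H : Type*} [NormedAddCommGroup H] [InnerProductSpace ℂ H]
    [CompleteSpace H] {n : ℕ} (Z : Fin n → (H →L[ℂ] H)) : H →L[ℂ] H :=
  ∑ σ : Equiv.Perm (Fin n), (List.ofFn fun i => Z (σ i)).prod

/-- The algebra of subsets of `α` generated by a collection `G` of subsets:
the smallest collection containing `G` and `univ` and closed under complements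
and finite unions. -/
inductive GenAlg {α : Type*} (G : Set (Set α)) : Set α → Prop
  | basic {s : Set α} : s ∈ G → GenAlg G s
  | univ : GenAlg G Set.univ
  | compl {s : Set α} : GenAlg G s → GenAlg G sᶜ
  | union {s t : Set α} : GenAlg G s → GenAlg G t → GenAlg G (s ∪ t)

/-- The product algebra on `Π i, Λ i`: the algebra of subsets generated by the
rectangles `B₁ × ⋯ × Bₙ` with measurable sides `Bᵢ ∈ Fᵢ`. -/
def prodAlgebra {ι : Type*} {Λ : ι → Type*} (F : ∀ i, SetAlgebra (Λ i)) :
    Set (Set (∀ i, Λ i)) :=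
  {S | GenAlg {R | ∃ B : ∀ i, Set (Λ i), (∀ i, B i ∈ (F i).sets) ∧ R = Set.univ.pi B} S}

/-!
Both sides are finitely additive in `Fs`, and rectangles form a π-system containing `univ`, so
by a finitely additive π-λ argument it suffices to compare them on rectangles. The cylinder over
a rectangle `Π B_j` is the rectangle with side `B_j` at `ι j` and `univ` elsewhere, where the
PVMs take the value `1`. Dropping `n - k` factors equal to `1` from the `n!` ordered products of
`{·}_sym` leaves every ordered product of the remaining `k` factors exactly `n!/k!` times.
-/

theorem SetAlgebra.inter_mem {α : Type*} (F : SetAlgebra α) {s t : Set α} (hs : s ∈ F.sets)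
    (ht : t ∈ F.sets) : s ∩ t ∈ F.sets := by
  simpa [Set.compl_union] using F.compl_mem (F.union_mem (F.compl_mem hs) (F.compl_mem ht))

def IsAdditiveOn {α E : Type*} [Add E] (𝒜 : Set (Set α)) (m : Set α → E) : Prop :=
  ∀ ⦃s t : Set α⦄, s ∈ 𝒜 → t ∈ 𝒜 → Disjoint s t → m (s ∪ t) = m s + m t

theorem IsAdditiveOn.comp_preimage {α β E : Type*} [Add E] {𝒜 : Set (Set α)}
    {𝒜' : Set (Set β)} {m : Set α → E} (hm : IsAdditiveOn 𝒜 m) {f : α → β}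
    (hf : ∀ s ∈ 𝒜', f ⁻¹' s ∈ 𝒜) : IsAdditiveOn 𝒜' fun s => m (f ⁻¹' s) :=
  fun s t hs ht hst => by
    simpa only [Set.preimage_union] using hm (hf s hs) (hf t ht) (hst.preimage f)

theorem GenAlg.preimage {α β : Type*} {G : Set (Set α)} {G' : Set (Set β)} {f : β → α}
    (hG : ∀ s ∈ G, GenAlg G' (f ⁻¹' s)) {s : Set α} (hs : GenAlg G s) :
    GenAlg G' (f ⁻¹' s) := by
  induction hs with
  | basic h => exact hG _ h
  | univ => exact .univ
  | compl _ ih => exact ih.compl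
  | union _ _ ihs iht => exact ihs.union iht

/-- The finitely additive analogue of `MeasurableSpace.DynkinSystem.generate`: Dynkin's π-λ
argument only ever takes finite disjoint unions. -/
inductive GenDynkin {α : Type*} (G : Set (Set α)) : Set α → Prop
  | basic {s : Set α} : s ∈ G → GenDynkin G s
  | univ : GenDynkin G Set.univ
  | compl {s : Set α} : GenDynkin G s → GenDynkin G sᶜ
  | union {s t : Set α} : GenDynkin G s → GenDynkin G t → Disjoint s t → GenDynkin G (s ∪ t)

namespace GenDynkin

variable {α : Type*} {G : Set (Set α)} {s t : Set α}

theorem genAlg (hs : GenDynkin G s) : GenAlg G s := by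
  induction hs with
  | basic h => exact .basic h
  | univ => exact .univ
  | compl _ ih => exact ih.compl
  | union _ _ _ ihs iht => exact ihs.union iht

theorem empty : GenDynkin G ∅ := by
  simpa using (univ (G := G)).compl

theorem inter_of_forall_mem (ht : GenDynkin G t) (h : ∀ s ∈ G, GenDynkin G (s ∩ t))
    (hs : GenDynkin G s) : GenDynkin G (s ∩ t) := by
  induction hs with
  | basic hs => exact h _ hs
  | univ => simpa using ht
  | @compl s _ ih =>
    have hdisj : Disjoint tᶜ (s ∩ t) := disjoint_compl_left.mono_right Set.inter_subset_right
    convert (ht.compl.union ih hdisj).compl using 1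
    ext x
    simp only [Set.mem_inter_iff, Set.mem_compl_iff, Set.mem_union]
    tauto
  | union _ _ hd ihs iht =>
    rw [Set.union_inter_distrib_right]
    exact ihs.union iht (hd.mono Set.inter_subset_left Set.inter_subset_left)

theorem inter (hG : IsPiSystem G) (hs : GenDynkin G s) (ht : GenDynkin G t) :
    GenDynkin G (s ∩ t) := by
  have inter_basic : ∀ t ∈ G, ∀ s, GenDynkin G s → GenDynkin G (s ∩ t) := by
    refine fun t ht s hs => inter_of_forall_mem (basic ht) (fun s hs' => ?_) hs
    rcases (s ∩ t).eq_empty_or_nonempty with h | h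
    · exact h ▸ empty
    · exact basic (hG s hs' t ht h)
  exact inter_of_forall_mem ht (fun s hs' => Set.inter_comm t s ▸ inter_basic s hs' t ht) hs

theorem of_genAlg (hG : IsPiSystem G) (hs : GenAlg G s) : GenDynkin G s := by
  induction hs with
  | basic h => exact basic h
  | univ => exact univ
  | compl _ ih => exact ih.compl
  | @union s t _ _ ihs iht =>
    rw [← Set.union_sdiff_self, Set.sdiff_eq]
    exact ihs.union (iht.inter hG ihs.compl)
      (disjoint_compl_right.mono_right Set.inter_subset_right)

end GenDynkin

theorem GenAlg.eqOn_of_isPiSystem {α E : Type*} [Add E] [IsLeftCancelAdd E]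
    {G : Set (Set α)} (hG : IsPiSystem G) {m₁ m₂ : Set α → E}
    (h₁ : IsAdditiveOn {s | GenAlg G s} m₁) (h₂ : IsAdditiveOn {s | GenAlg G s} m₂)
    (h_eq : ∀ s ∈ G, m₁ s = m₂ s) (h_univ : m₁ Set.univ = m₂ Set.univ) :
    Set.EqOn m₁ m₂ {s | GenAlg G s} := by
  intro s hs
  replace hs := GenDynkin.of_genAlg hG hs
  induction hs with
  | basic h => exact h_eq _ h
  | univ => exact h_univ
  | @compl s hs ih =>
    have h₁s := h₁ hs.genAlg hs.genAlg.compl disjoint_compl_right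
    have h₂s := h₂ hs.genAlg hs.genAlg.compl disjoint_compl_right
    rw [Set.union_compl_self] at h₁s h₂s
    exact add_left_cancel (h₁s.symm.trans (h_univ.trans (ih ▸ h₂s)))
  | union hs ht hd ihs iht =>
    rw [h₁ hs.genAlg ht.genAlg hd, h₂ hs.genAlg ht.genAlg hd, ihs, iht]

section Rectangles

variable {κ κ' : Type*} {Λ : κ → Type*}

def rectangles (F : ∀ i, SetAlgebra (Λ i)) : Set (Set (∀ i, Λ i)) :=
  {R | ∃ B : ∀ i, Set (Λ i), (∀ i, B i ∈ (F i).sets) ∧ R = Set.univ.pi B}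

theorem isPiSystem_rectangles (F : ∀ i, SetAlgebra (Λ i)) : IsPiSystem (rectangles F) := by
  rintro _ ⟨B₁, hB₁, rfl⟩ _ ⟨B₂, hB₂, rfl⟩ -
  exact ⟨fun i => B₁ i ∩ B₂ i, fun i => (F i).inter_mem (hB₁ i) (hB₂ i),
    Set.pi_inter_distrib.symm⟩

def cylinderSides (ι : κ' → κ) (B : ∀ j, Set (Λ (ι j))) (i : κ) : Set (Λ i) :=
  {y | ∀ j (h : ι j = i), y ∈ (h ▸ B j : Set (Λ i))}

theorem cylinderSides_apply {ι : κ' → κ} (hι : Function.Injective ι) (B : ∀ j, Set (Λ (ι j)))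
    (j : κ') : cylinderSides ι B (ι j) = B j := by
  ext y
  refine ⟨fun hy => hy j rfl, fun hy j' h => ?_⟩
  obtain rfl := hι h
  exact hy

theorem cylinderSides_of_notMem_range {ι : κ' → κ} (B : ∀ j, Set (Λ (ι j))) {i : κ}
    (hi : i ∉ Set.range ι) : cylinderSides ι B i = Set.univ :=
  Set.eq_univ_of_forall fun _ j h => absurd ⟨j, h⟩ hi

theorem preimage_pi_eq_pi_cylinderSides (ι : κ' → κ) (B : ∀ j, Set (Λ (ι j))) :
    (fun (x : ∀ i, Λ i) j => x (ι j)) ⁻¹' Set.univ.pi B = Set.univ.pi (cylinderSides ι B) := by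
  ext x
  simp only [Set.mem_preimage, Set.mem_univ_pi, cylinderSides, Set.mem_ofPred_eq]
  exact ⟨fun hx i j h => by subst h; exact hx j, fun hx j => hx (ι j) j rfl⟩

theorem cylinderSides_mem {F : ∀ i, SetAlgebra (Λ i)} {ι : κ' → κ} (hι : Function.Injective ι)
    {B : ∀ j, Set (Λ (ι j))} (hB : ∀ j, B j ∈ (F (ι j)).sets) (i : κ) :
    cylinderSides ι B i ∈ (F i).sets := by
  by_cases hi : i ∈ Set.range ι
  · obtain ⟨j, rfl⟩ := hi
    exact cylinderSides_apply hι B j ▸ hB j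
  · exact cylinderSides_of_notMem_range B hi ▸ (F i).univ_mem

theorem preimage_mem_prodAlgebra {F : ∀ i, SetAlgebra (Λ i)} {ι : κ' → κ}
    (hι : Function.Injective ι) {s : Set (∀ j, Λ (ι j))} (hs : s ∈ prodAlgebra fun j => F (ι j)) :
    (fun (x : ∀ i, Λ i) j => x (ι j)) ⁻¹' s ∈ prodAlgebra F := by
  refine GenAlg.preimage (G := rectangles fun j => F (ι j)) ?_ hs
  rintro _ ⟨B, hB, rfl⟩
  exact .basic ⟨_, cylinderSides_mem hι hB, preimage_pi_eq_pi_cylinderSides ι B⟩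

end Rectangles

theorem List.prod_ofFn_succAbove_of_eq_one {M : Type*} [Monoid M] :
    ∀ {n : ℕ} (g : Fin (n + 1) → M) (j : Fin (n + 1)), g j = 1 →
      (List.ofFn (g ∘ j.succAbove)).prod = (List.ofFn g).prod
  | 0, g, j, hj => by
    obtain rfl := Fin.fin_one_eq_zero j
    simp [hj]
  | n + 1, g, j, hj => by
    cases j using Fin.cases with
    | zero => simp [List.ofFn_succ, hj]
    | succ j =>
      have := List.prod_ofFn_succAbove_of_eq_one (fun i => g i.succ) j hj
      simp only [List.ofFn_succ, Function.comp_apply, Fin.succ_succAbove_zero,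
        Fin.succ_succAbove_succ, List.prod_cons] at this ⊢
      exact congrArg (g 0 * ·) this


namespace Equiv.Perm

variable {n : ℕ}

def extendSuccAbove (q j : Fin (n + 1)) (τ : Perm (Fin n)) : Perm (Fin (n + 1)) :=
  (finSuccEquiv' j).trans ((Equiv.optionCongr τ).trans (finSuccEquiv' q).symm)

@[simp]
theorem extendSuccAbove_apply_self (q j : Fin (n + 1)) (τ : Perm (Fin n)) :
    extendSuccAbove q j τ j = q := by
  simp [extendSuccAbove]

@[simp]
theorem extendSuccAbove_apply_succAbove (q j : Fin (n + 1)) (τ : Perm (Fin n)) (m : Fin n) :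
    extendSuccAbove q j τ (j.succAbove m) = q.succAbove (τ m) := by
  simp [extendSuccAbove]

theorem bijective_extendSuccAbove (q : Fin (n + 1)) :
    Function.Bijective fun p : Fin (n + 1) × Perm (Fin n) => extendSuccAbove q p.1 p.2 := by
  refine (Fintype.bijective_iff_injective_and_card _).2
    ⟨?_, by simp [Fintype.card_perm, Nat.factorial_succ]⟩
  rintro ⟨j, τ⟩ ⟨j', τ'⟩ h
  obtain rfl : j = j' := (extendSuccAbove q j τ).injective <| by
    simp only at h
    rw [extendSuccAbove_apply_self, h, extendSuccAbove_apply_self]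
  simp only at h
  obtain rfl : τ = τ' := Equiv.ext fun m => by simpa using congrArg (· (j.succAbove m)) h
  rfl

end Equiv.Perm

section symProd

variable {H : Type*} [NormedAddCommGroup H] [InnerProductSpace ℂ H] [CompleteSpace H]

theorem symProd_comp_equiv {m n : ℕ} (e : Fin m ≃ Fin n) (Z : Fin n → (H →L[ℂ] H)) :
    symProd (Z ∘ e) = symProd Z := by
  obtain rfl : m = n := by simpa using Fintype.card_congr e
  exact Fintype.sum_equiv (Equiv.mulLeft e) _ _ fun σ => rfl

theorem symProd_eq_nsmul_symProd_succAbove {n : ℕ} (Z : Fin (n + 1) → (H →L[ℂ] H))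
    (q : Fin (n + 1)) (hq : Z q = 1) :
    symProd Z = (n + 1) • symProd (Z ∘ q.succAbove) := by
  have hprod : ∀ j τ, (List.ofFn fun i => Z (Equiv.Perm.extendSuccAbove q j τ i)).prod =
      (List.ofFn fun m => (Z ∘ q.succAbove) (τ m)).prod := by
    intro j τ
    rw [← List.prod_ofFn_succAbove_of_eq_one _ j (by simpa using hq)]
    simp [Function.comp_def]
  unfold symProd
  rw [← Fintype.sum_bijective _ (Equiv.Perm.bijective_extendSuccAbove q) _ _ fun _ => rfl,
    Fintype.sum_prod_type]
  simp only [hprod, Finset.sum_const, Finset.card_univ, Fintype.card_fin]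

theorem factorial_nsmul_symProd_eq {n k : ℕ} (ι : Fin k → Fin n) (hι : Function.Injective ι)
    (Z : Fin n → (H →L[ℂ] H)) (hZ : ∀ i ∉ Set.range ι, Z i = 1) :
    k.factorial • symProd Z = n.factorial • symProd (Z ∘ ι) := by
  induction n generalizing k with
  | zero =>
    obtain rfl : k = 0 := by simpa using Fintype.card_le_of_injective ι hι
    rw [Subsingleton.elim (Z ∘ ι) Z]
  | succ n ih =>
    by_cases hsurj : Function.Surjective ι
    · let e := Equiv.ofBijective ι ⟨hι, hsurj⟩
      obtain rfl : k = n + 1 := by simpa using Fintype.card_congr e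
      rw [show Z ∘ ι = Z ∘ e from rfl, symProd_comp_equiv]
    · obtain ⟨q, hq⟩ := not_forall.1 hsurj
      choose ι' hι' using fun j => Fin.exists_succAbove_eq fun h : ι j = q => hq ⟨j, h⟩
      have hι'inj : Function.Injective ι' := fun a b h => hι (by rw [← hι' a, ← hι' b, h])
      have hZ' : ∀ m ∉ Set.range ι', (Z ∘ q.succAbove) m = 1 := by
        refine fun m hm => hZ _ fun ⟨j, hj⟩ => hm ⟨j, Fin.succAbove_right_injective (p := q) ?_⟩
        rw [hι', hj]
      have hfactor : (Z ∘ q.succAbove) ∘ ι' = Z ∘ ι := funext fun j => by simp [hι']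
      rw [symProd_eq_nsmul_symProd_succAbove Z q (hZ q fun ⟨j, h⟩ => hq ⟨j, h⟩), smul_comm,
        ih ι' hι'inj _ hZ', hfactor, smul_smul, Nat.factorial_succ]

theorem inv_factorial_smul_symProd_eq {n k : ℕ} (ι : Fin k → Fin n)
    (hι : Function.Injective ι) (Z : Fin n → (H →L[ℂ] H)) (hZ : ∀ i ∉ Set.range ι, Z i = 1) :
    (n.factorial : ℂ)⁻¹ • symProd Z = (k.factorial : ℂ)⁻¹ • symProd (Z ∘ ι) := by
  have hfac (m : ℕ) : (m.factorial : ℂ) ≠ 0 := Nat.cast_ne_zero.2 m.factorial_ne_zero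
  have h := factorial_nsmul_symProd_eq ι hι Z hZ
  rw [← Nat.cast_smul_eq_nsmul ℂ, ← Nat.cast_smul_eq_nsmul ℂ] at h
  rw [inv_smul_eq_iff₀ (hfac n), smul_comm, eq_inv_smul_iff₀ (hfac k), h]

end symProd

/-- If `Q` is a finitely additive operator-valued measure on the product
algebra on `Λ₁ × ⋯ × Λₙ` given on rectangles by `(1/n!)·{P₁(B₁)⋯Pₙ(Bₙ)}_sym`, and `R` on the
product algebra of the subtuple `Λ_{i₁} × ⋯ × Λ_{i_k}` given on rectangles by
`(1/k!)·{P_{i₁}(B_{i₁})⋯P_{i_k}(B_{i_k})}_sym`, then for every `F` in the subtuple product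
algebra, `Q` of the cylinder over `F` equals `R F`. -/
theorem prodMeasure_marginal
    {H : Type*} [NormedAddCommGroup H] [InnerProductSpace ℂ H] [CompleteSpace H]
    {n k : ℕ} {Λ : Fin n → Type*} {F : ∀ i, SetAlgebra (Λ i)}
    (P : ∀ i, PVM H (F i))
    (ι : Fin k → Fin n) (hι : StrictMono ι)
    (Q : Set (∀ i, Λ i) → (H →L[ℂ] H))
    (R : Set (∀ j : Fin k, Λ (ι j)) → (H →L[ℂ] H))
    (hQadd : ∀ ⦃A B : Set (∀ i, Λ i)⦄, A ∈ prodAlgebra F → B ∈ prodAlgebra F →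
      Disjoint A B → Q (A ∪ B) = Q A + Q B)
    (hRadd : ∀ ⦃A B : Set (∀ j : Fin k, Λ (ι j))⦄,
      A ∈ prodAlgebra (fun j => F (ι j)) → B ∈ prodAlgebra (fun j => F (ι j)) →
      Disjoint A B → R (A ∪ B) = R A + R B)
    (hQ : ∀ (B : ∀ i, Set (Λ i)), (∀ i, B i ∈ (F i).sets) →
      Q (Set.univ.pi B) = (n.factorial : ℂ)⁻¹ • symProd (fun i => (P i).toFun (B i)))
    (hR : ∀ (B : ∀ j : Fin k, Set (Λ (ι j))), (∀ j, B j ∈ (F (ι j)).sets) →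
      R (Set.univ.pi B) = (k.factorial : ℂ)⁻¹ • symProd (fun j => (P (ι j)).toFun (B j)))
    (Fs : Set (∀ j : Fin k, Λ (ι j))) (hFs : Fs ∈ prodAlgebra (fun j => F (ι j))) :
    Q {x : ∀ i, Λ i | (fun j => x (ι j)) ∈ Fs} = R Fs := by
  have hinj := hι.injective
  have hrect : ∀ B, (∀ j, B j ∈ (F (ι j)).sets) →
      Q ((fun x j => x (ι j)) ⁻¹' Set.univ.pi B) = R (Set.univ.pi B) := by
    intro B hB
    rw [preimage_pi_eq_pi_cylinderSides, hQ _ (cylinderSides_mem hinj hB), hR B hB,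
      inv_factorial_smul_symProd_eq ι hinj]
    · simp only [Function.comp_def, cylinderSides_apply hinj]
    · intro i hi
      simp only [cylinderSides_of_notMem_range B hi, (P i).map_univ]
  refine GenAlg.eqOn_of_isPiSystem (isPiSystem_rectangles _)
    (IsAdditiveOn.comp_preimage hQadd fun s hs => preimage_mem_prodAlgebra hinj hs) hRadd
    ?_ ?_ hFs
  · rintro _ ⟨B, hB, rfl⟩
    exact hrect B hB
  · simpa using hrect _ fun j => (F (ι j)).univ_mem
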